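/- Let K be a field of characteristic p > 7 and f = x^3 + y^7 + a x y^5 ∈ K[[x,y]] for a ∈ K. Then μ(f) = 12. -/

import Mathlib

/-!
The Jacobian ideal of `x³ + y⁷ + a x y⁵` is `J = (3x² + a y⁵, 7y⁶ + 5a x y⁴)`. Since `3` and `7`
are invertible, `J` contains `y⁸` (because `y⁸ (147 + 25a³ y) ∈ J`), hence `x²y³` and `x⁴`. So
modulo `J` every power series is a combination of the monomials `x^k y^l` with `k ≤ 3`, `l ≤ 7`,
and the relations `3x² ≡ -a y⁵`, `7y⁶ ≡ -5a x y⁴` reduce these to the twelve monomials `y^j`,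
`x y^j` (`j ≤ 5`). They stay independent modulo `J` because twelve explicit linear functionals,
coefficient extractions with three of them corrected, vanish on `J` and are dual to them.
-/

open MvPowerSeries

noncomputable def pd {n : ℕ} {K : Type} [Field K] (i : Fin n)
    (f : MvPowerSeries (Fin n) K) : MvPowerSeries (Fin n) K :=
  fun m => ((m i + 1 : ℕ) : K) * MvPowerSeries.coeff (R := K) (m + Finsupp.single i 1) f

/-- The Milnor number: dimension of the quotient by the Jacobian ideal. -/
noncomputable def milnor {n : ℕ} (K : Type) [Field K] (f : MvPowerSeries (Fin n) K) : ℕ :=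
  Module.finrank K (MvPowerSeries (Fin n) K ⧸ Ideal.span (Set.range fun i => pd i f))

theorem pd_eq_pderiv {n : ℕ} {K : Type} [Field K] (i : Fin n) (f : MvPowerSeries (Fin n) K) :
    pd i f = pderiv K i f := by
  ext m
  rw [coeff_pderiv, mul_comm]
  change ((m i + 1 : ℕ) : K) * _ = _
  push_cast
  rfl

namespace MvPowerSeries

variable {σ R : Type*} [CommRing R]

theorem mem_ideal_of_coeff_eq_zero {I : Ideal (MvPowerSeries σ R)} (s : Finset (σ →₀ ℕ))
    (hs : ∀ e ∈ s, monomial e 1 ∈ I) {t : MvPowerSeries σ R}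
    (ht : ∀ m, (∀ e ∈ s, ¬ e ≤ m) → coeff m t = 0) : t ∈ I := by
  classical
  induction s using Finset.induction_on generalizing t with
  | empty =>
    convert I.zero_mem
    ext m
    simpa using ht m
  | insert e s he ih =>
    -- `t - X^e * shift` agrees with `t` off the multiples of `X^e` and vanishes on them.
    set shift : MvPowerSeries σ R := fun m => coeff (m + e) t
    have hrest : t - monomial e 1 * shift ∈ I := by
      refine ih (fun e' he' => hs e' (Finset.mem_insert_of_mem he')) fun m hm => ?_
      rw [map_sub, coeff_monomial_mul]
      split_ifs with hem
      · rw [one_mul, show coeff (m - e) shift = coeff (m - e + e) t from rfl,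
          tsub_add_cancel_of_le hem, sub_self]
      · simpa using ht m (by simpa [hem] using hm)
    simpa using I.add_mem hrest (I.mul_mem_right shift (hs e (Finset.mem_insert_self e s)))

theorem isUnit_ofNat {n : ℕ} [n.AtLeastTwo] (h : IsUnit (OfNat.ofNat n : R)) :
    IsUnit (OfNat.ofNat n : MvPowerSeries σ R) := by
  rwa [isUnit_iff_constantCoeff, map_ofNat]

end MvPowerSeries

theorem Ideal.finrank_quotient_eq_card {K A ι : Type*} [Field K] [CommRing A] [Algebra K A]
    [Fintype ι] [DecidableEq ι] (I : Ideal A) (b : ι → A) (Φ : A →ₗ[K] ι → K)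
    (hΦb : ∀ i, Φ (b i) = Pi.single i 1) (hΦI : ∀ x ∈ I, Φ x = 0)
    (hspan : ∀ x, x ∈ I.restrictScalars K ⊔ Submodule.span K (Set.range b)) :
    Module.finrank K (A ⧸ I) = Fintype.card ι := by
  have hΦsum (c : ι → K) : Φ (∑ i, c i • b i) = c := by
    ext j
    simp [hΦb, Pi.single_apply]
  have hker : LinearMap.ker Φ = I.restrictScalars K := by
    refine le_antisymm (fun x hx => ?_) hΦI
    obtain ⟨y, hy, z, hz, rfl⟩ := Submodule.mem_sup.mp (hspan x)
    obtain ⟨c, rfl⟩ := (Submodule.mem_span_range_iff_exists_fun K).mp hz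
    have hc : c = 0 := by
      rw [LinearMap.mem_ker, map_add, hΦI y hy, zero_add, hΦsum] at hx
      exact hx
    simpa [hc] using hy
  have hsurj : Function.Surjective Φ := fun c => ⟨_, hΦsum c⟩
  rw [← (Submodule.Quotient.restrictScalarsEquiv K I).finrank_eq, ← hker,
    (Φ.quotKerEquivOfSurjective hsurj).finrank_eq, Module.finrank_fintype_fun_eq_card]

theorem CharP.natCast_ne_zero_of_lt {R : Type*} [AddMonoidWithOne R] {p n : ℕ} [CharP R p]
    (hn : 0 < n) (hnp : n < p) : (n : R) ≠ 0 := by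
  rw [Ne, CharP.cast_eq_zero_iff R p]
  exact fun h => absurd (Nat.le_of_dvd hn h) (not_le.mpr hnp)

namespace E12

open Finsupp (single)

variable {K : Type} [Field K]

noncomputable def mexp (i j : ℕ) : Fin 2 →₀ ℕ := single 0 i + single 1 j

@[simp] lemma mexp_apply_zero (i j : ℕ) : mexp i j 0 = i := by simp [mexp]

@[simp] lemma mexp_apply_one (i j : ℕ) : mexp i j 1 = j := by simp [mexp]

lemma mexp_apply_self (m : Fin 2 →₀ ℕ) : mexp (m 0) (m 1) = m := by
  ext x; fin_cases x <;> simp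

lemma mexp_inj {i j k l : ℕ} : mexp i j = mexp k l ↔ i = k ∧ j = l := by
  refine ⟨fun h => ⟨by simpa using congr($h 0), by simpa using congr($h 1)⟩, ?_⟩
  rintro ⟨rfl, rfl⟩; rfl

lemma mexp_le_mexp {i j k l : ℕ} : mexp i j ≤ mexp k l ↔ i ≤ k ∧ j ≤ l := by
  refine ⟨fun h => ⟨by simpa using h 0, by simpa using h 1⟩, ?_⟩
  rintro ⟨hi, hj⟩ x; fin_cases x <;> simpa

lemma mexp_sub_mexp (i j k l : ℕ) : mexp i j - mexp k l = mexp (i - k) (j - l) := by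
  ext x; fin_cases x <;> simp

lemma X_pow_mul_X_pow (i j : ℕ) :
    (X 0 ^ i * X 1 ^ j : MvPowerSeries (Fin 2) K) = monomial (mexp i j) 1 := by
  rw [X_pow_eq, X_pow_eq, monomial_mul_monomial, mul_one, mexp]

lemma coeff_mul_X_pow_mul_X_pow (r : MvPowerSeries (Fin 2) K) (i j k l : ℕ) :
    coeff (mexp i j) (r * (X 0 ^ k * X 1 ^ l)) =
      if k ≤ i ∧ l ≤ j then coeff (mexp (i - k) (j - l)) r else 0 := by
  simp only [X_pow_mul_X_pow, coeff_mul_monomial, mexp_le_mexp, mexp_sub_mexp, mul_one]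

noncomputable def e12 (a : K) : MvPowerSeries (Fin 2) K := X 0 ^ 3 + X 1 ^ 7 + C a * X 0 * X 1 ^ 5

noncomputable def fx (a : K) : MvPowerSeries (Fin 2) K := 3 * X 0 ^ 2 + C a * X 1 ^ 5

noncomputable def fy (a : K) : MvPowerSeries (Fin 2) K := 7 * X 1 ^ 6 + 5 * C a * X 0 * X 1 ^ 4

noncomputable def jac (a : K) : Ideal (MvPowerSeries (Fin 2) K) := Ideal.span {fx a, fy a}

lemma span_range_pd_e12 (a : K) : Ideal.span (Set.range fun i => pd i (e12 a)) = jac a := by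
  obtain ⟨h0, h1⟩ : pd 0 (e12 a) = fx a ∧ pd 1 (e12 a) = fy a := by
    constructor <;>
    · simp only [pd_eq_pderiv, e12, fx, fy, map_add, Derivation.leibniz_pow, Derivation.leibniz,
        pderiv_X_self, pderiv_X_of_ne, pderiv_C, ne_eq, one_ne_zero, zero_ne_one, not_false_eq_true,
        smul_eq_mul, nsmul_eq_mul, mul_one, mul_zero, add_zero, zero_add, Nat.cast_ofNat,
        Nat.add_one_sub_one]
      ring
  rw [jac, ← h0, ← h1, Fin.range_fin_succ, Set.range_unique]
  rfl

lemma fx_mem_jac (a : K) : fx a ∈ jac a := Ideal.subset_span (by simp)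

lemma fy_mem_jac (a : K) : fy a ∈ jac a := Ideal.subset_span (by simp)

lemma X1_pow_eight_mem_jac {a : K} (h3 : (3 : K) ≠ 0) (h7 : (7 : K) ≠ 0) :
    X 1 ^ 8 ∈ jac a := by
  have hunit : IsUnit (147 + C (25 * a ^ 3) * X 1 : MvPowerSeries (Fin 2) K) := by
    have h147 : (147 : K) = 3 * 7 ^ 2 := by norm_num
    rw [isUnit_iff_constantCoeff, map_add, map_mul, constantCoeff_X, mul_zero, add_zero,
      map_ofNat, h147]
    exact (mul_ne_zero h3 (pow_ne_zero 2 h7)).isUnit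
  have key : X 1 ^ 8 * (147 + C (25 * a ^ 3) * X 1) =
      (21 * X 1 ^ 2 - 15 * C a * X 0) * fy a + 25 * C a ^ 2 * X 1 ^ 4 * fx a := by
    simp only [fx, fy, map_mul, map_pow, map_ofNat]
    ring
  rw [← Ideal.mul_unit_mem_iff_mem _ hunit, key]
  exact Ideal.add_mem _ (Ideal.mul_mem_left _ _ (fy_mem_jac a))
    (Ideal.mul_mem_left _ _ (fx_mem_jac a))

lemma X0_sq_mul_X1_cube_mem_jac {a : K} (h3 : (3 : K) ≠ 0) (h7 : (7 : K) ≠ 0) :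
    X 0 ^ 2 * X 1 ^ 3 ∈ jac a := by
  have key : 3 * (X 0 ^ 2 * X 1 ^ 3) = X 1 ^ 3 * fx a - C a * X 1 ^ 8 := by
    rw [fx]; ring
  rw [← Ideal.unit_mul_mem_iff_mem _ (isUnit_ofNat h3.isUnit), key]
  exact Ideal.sub_mem _ (Ideal.mul_mem_left _ _ (fx_mem_jac a))
    (Ideal.mul_mem_left _ _ (X1_pow_eight_mem_jac h3 h7))

lemma X0_pow_four_mem_jac {a : K} (h3 : (3 : K) ≠ 0) (h7 : (7 : K) ≠ 0) :
    X 0 ^ 4 ∈ jac a := by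
  have key : 3 * X 0 ^ 4 = X 0 ^ 2 * fx a - C a * X 1 ^ 2 * (X 0 ^ 2 * X 1 ^ 3) := by
    rw [fx]; ring
  rw [← Ideal.unit_mul_mem_iff_mem _ (isUnit_ofNat h3.isUnit), key]
  exact Ideal.sub_mem _ (Ideal.mul_mem_left _ _ (fx_mem_jac a))
    (Ideal.mul_mem_left _ _ (X0_sq_mul_X1_cube_mem_jac h3 h7))

lemma X_pow_mul_X_pow_mem_jac {a : K} (h3 : (3 : K) ≠ 0) (h7 : (7 : K) ≠ 0) {k l : ℕ}
    (hk : 2 ≤ k) (hl : 3 ≤ l) : X 0 ^ k * X 1 ^ l ∈ jac a := by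
  obtain ⟨k, rfl⟩ := Nat.exists_eq_add_of_le hk
  obtain ⟨l, rfl⟩ := Nat.exists_eq_add_of_le hl
  rw [show (X 0 ^ (2 + k) * X 1 ^ (3 + l) : MvPowerSeries (Fin 2) K) =
    X 0 ^ 2 * X 1 ^ 3 * (X 0 ^ k * X 1 ^ l) by ring]
  exact Ideal.mul_mem_right _ _ (X0_sq_mul_X1_cube_mem_jac h3 h7)

lemma coeff_mul_fx (a : K) (r : MvPowerSeries (Fin 2) K) (i j : ℕ) :
    coeff (mexp i j) (r * fx a) =
      (if 2 ≤ i then 3 * coeff (mexp (i - 2) j) r else 0) +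
        (if 5 ≤ j then a * coeff (mexp i (j - 5)) r else 0) := by
  have : r * fx a = C 3 * (r * (X 0 ^ 2 * X 1 ^ 0)) + C a * (r * (X 0 ^ 0 * X 1 ^ 5)) := by
    rw [fx, map_ofNat]; ring
  rw [this, map_add, coeff_C_mul, coeff_C_mul, coeff_mul_X_pow_mul_X_pow,
    coeff_mul_X_pow_mul_X_pow]
  simp

lemma coeff_mul_fy (a : K) (r : MvPowerSeries (Fin 2) K) (i j : ℕ) :
    coeff (mexp i j) (r * fy a) =
      (if 6 ≤ j then 7 * coeff (mexp i (j - 6)) r else 0) +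
        (if 1 ≤ i ∧ 4 ≤ j then 5 * a * coeff (mexp (i - 1) (j - 4)) r else 0) := by
  have : r * fy a = C 7 * (r * (X 0 ^ 0 * X 1 ^ 6)) + C (5 * a) * (r * (X 0 ^ 1 * X 1 ^ 4)) := by
    rw [fy, map_ofNat, map_mul, map_ofNat]; ring
  rw [this, map_add, coeff_C_mul, coeff_C_mul, coeff_mul_X_pow_mul_X_pow,
    coeff_mul_X_pow_mul_X_pow]
  simp

noncomputable def milnorBasis (s : Fin 12) : MvPowerSeries (Fin 2) K :=
  monomial (mexp (s / 6) (s % 6)) 1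

/-- The corrections in the coordinates of `y⁵`, `x y⁴` and `x y⁵` make them vanish on `jac a`:
e.g. the coefficients of `y⁵` and `x²` in `r * fx a` are `a r₀₀` and `3 r₀₀`. -/
noncomputable def milnorCoord (a : K) : Fin 12 → MvPowerSeries (Fin 2) K →ₗ[K] K :=
  ![coeff (mexp 0 0), coeff (mexp 0 1), coeff (mexp 0 2), coeff (mexp 0 3), coeff (mexp 0 4),
    coeff (mexp 0 5) - (a / 3) • coeff (mexp 2 0),
    coeff (mexp 1 0), coeff (mexp 1 1), coeff (mexp 1 2), coeff (mexp 1 3),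
    coeff (mexp 1 4) - (5 * a / 7) • coeff (mexp 0 6) + (5 * a ^ 2 / 21) • coeff (mexp 2 1),
    coeff (mexp 1 5) - (5 * a / 7) • coeff (mexp 0 7) + (5 * a ^ 2 / 21) • coeff (mexp 2 2) -
      (a / 3) • coeff (mexp 3 0)]

lemma milnorCoord_milnorBasis (a : K) (s : Fin 12) :
    LinearMap.pi (milnorCoord a) (milnorBasis s) = Pi.single s 1 := by
  ext r
  fin_cases r <;> fin_cases s <;> simp [milnorCoord, milnorBasis, coeff_monomial, mexp_inj]

lemma milnorCoord_eq_zero_of_mem_jac {a : K} (h3 : (3 : K) ≠ 0) (h7 : (7 : K) ≠ 0)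
    {z : MvPowerSeries (Fin 2) K} (hz : z ∈ jac a) : LinearMap.pi (milnorCoord a) z = 0 := by
  have h21 : (21 : K) ≠ 0 := by
    rw [show (21 : K) = 3 * 7 by norm_num]
    exact mul_ne_zero h3 h7
  obtain ⟨r₁, r₂, rfl⟩ := Ideal.mem_span_pair.mp hz
  ext s
  fin_cases s <;> simp [milnorCoord, coeff_mul_fx, coeff_mul_fy] <;>
    field_simp <;> ring

noncomputable def jacSupSpan (a : K) : Submodule K (MvPowerSeries (Fin 2) K) :=
  (jac a).restrictScalars K ⊔ Submodule.span K (Set.range milnorBasis)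

lemma mem_jacSupSpan_of_mem_jac {a : K} {z : MvPowerSeries (Fin 2) K} (hz : z ∈ jac a) :
    z ∈ jacSupSpan a :=
  Submodule.mem_sup_left hz

lemma X_pow_mul_X_pow_mem_jacSupSpan_of_lt_six (a : K) {k l : ℕ} (hk : k ≤ 1) (hl : l < 6) :
    X 0 ^ k * X 1 ^ l ∈ jacSupSpan a := by
  refine Submodule.mem_sup_right (Submodule.subset_span ⟨⟨6 * k + l, by omega⟩, ?_⟩)
  have hdiv : (6 * k + l) / 6 = k := by omega
  have hmod : (6 * k + l) % 6 = l := by omega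
  simp only [milnorBasis, X_pow_mul_X_pow, hdiv, hmod]

lemma X_pow_mul_X_pow_mem_jacSupSpan_of_le_one {a : K} (h3 : (3 : K) ≠ 0) (h7 : (7 : K) ≠ 0)
    {k l : ℕ} (hk : k ≤ 1) (hl : l ≤ 7) : X 0 ^ k * X 1 ^ l ∈ jacSupSpan a := by
  rcases lt_or_ge l 6 with hl6 | hl6
  · exact X_pow_mul_X_pow_mem_jacSupSpan_of_lt_six a hk hl6
  obtain ⟨n, rfl⟩ := Nat.exists_eq_add_of_le hl6
  have key : (7 : K) • (X 0 ^ k * X 1 ^ (6 + n)) =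
      X 0 ^ k * X 1 ^ n * fy a - (5 * a) • (X 0 ^ (k + 1) * X 1 ^ (4 + n)) := by
    simp only [smul_eq_C_mul, fy, map_mul, map_ofNat]
    ring
  rw [← Submodule.smul_mem_iff _ h7, key]
  refine Submodule.sub_mem _ (mem_jacSupSpan_of_mem_jac (Ideal.mul_mem_left _ _ (fy_mem_jac a)))
    (Submodule.smul_mem _ _ ?_)
  interval_cases k
  · exact X_pow_mul_X_pow_mem_jacSupSpan_of_lt_six a le_rfl (by omega)
  · exact mem_jacSupSpan_of_mem_jac (X_pow_mul_X_pow_mem_jac h3 h7 le_rfl (by omega))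

lemma X_pow_mul_X_pow_mem_jacSupSpan {a : K} (h3 : (3 : K) ≠ 0) (h7 : (7 : K) ≠ 0)
    {k l : ℕ} (hk : k ≤ 3) (hl : l ≤ 7) : X 0 ^ k * X 1 ^ l ∈ jacSupSpan a := by
  rcases le_or_gt k 1 with hk1 | hk1
  · exact X_pow_mul_X_pow_mem_jacSupSpan_of_le_one h3 h7 hk1 hl
  rcases le_or_gt 3 l with hl3 | hl3
  · exact mem_jacSupSpan_of_mem_jac (X_pow_mul_X_pow_mem_jac h3 h7 hk1 hl3)
  obtain ⟨k, rfl⟩ := Nat.exists_eq_add_of_le hk1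
  have key : (3 : K) • (X 0 ^ (2 + k) * X 1 ^ l) =
      X 0 ^ k * X 1 ^ l * fx a - a • (X 0 ^ k * X 1 ^ (5 + l)) := by
    simp only [smul_eq_C_mul, fx, map_ofNat]
    ring
  rw [← Submodule.smul_mem_iff _ h3, key]
  exact Submodule.sub_mem _ (mem_jacSupSpan_of_mem_jac (Ideal.mul_mem_left _ _ (fx_mem_jac a)))
    (Submodule.smul_mem _ _ (X_pow_mul_X_pow_mem_jacSupSpan_of_le_one h3 h7 (by omega) (by omega)))

lemma mem_jacSupSpan {a : K} (h3 : (3 : K) ≠ 0) (h7 : (7 : K) ≠ 0) (t : MvPowerSeries (Fin 2) K) :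
    t ∈ jacSupSpan a := by
  set low := ∑ m ∈ Finset.Iic (mexp 3 7), monomial m (coeff m t)
  have hlow : low ∈ jacSupSpan a := by
    refine Submodule.sum_mem _ fun m hm => ?_
    rw [← mul_one (coeff m t), ← smul_eq_mul, map_smul, ← mexp_apply_self m, ← X_pow_mul_X_pow]
    obtain ⟨hk, hl⟩ := mexp_le_mexp.mp (mexp_apply_self m ▸ Finset.mem_Iic.mp hm)
    exact Submodule.smul_mem _ _ (X_pow_mul_X_pow_mem_jacSupSpan h3 h7 hk hl)
  have htail : t - low ∈ jac a := by
    refine mem_ideal_of_coeff_eq_zero {mexp 4 0, mexp 2 3, mexp 0 8} ?_ fun m hm => ?_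
    · simp only [Finset.mem_insert, Finset.mem_singleton, forall_eq_or_imp, forall_eq,
        ← X_pow_mul_X_pow, pow_zero, mul_one, one_mul]
      exact ⟨X0_pow_four_mem_jac h3 h7, X0_sq_mul_X1_cube_mem_jac h3 h7, X1_pow_eight_mem_jac h3 h7⟩
    · rw [← mexp_apply_self m] at hm ⊢
      simp only [Finset.mem_insert, Finset.mem_singleton, forall_eq_or_imp, forall_eq,
        mexp_le_mexp] at hm
      have hmN : mexp (m 0) (m 1) ∈ Finset.Iic (mexp 3 7) := by
        rw [Finset.mem_Iic, mexp_le_mexp]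
        omega
      simp [low, coeff_monomial, hmN]
  simpa using Submodule.add_mem _ (mem_jacSupSpan_of_mem_jac htail) hlow

lemma finrank_quotient_jac {a : K} (h3 : (3 : K) ≠ 0) (h7 : (7 : K) ≠ 0) :
    Module.finrank K (MvPowerSeries (Fin 2) K ⧸ jac a) = 12 := by
  rw [Ideal.finrank_quotient_eq_card (jac a) milnorBasis (LinearMap.pi (milnorCoord a))
    (milnorCoord_milnorBasis a) (fun _ => milnorCoord_eq_zero_of_mem_jac h3 h7)
    (mem_jacSupSpan h3 h7), Fintype.card_fin]

end E12

theorem stmt3 (K : Type) [Field K] (p : ℕ) [CharP K p] (hp : 7 < p) (a : K) :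
    milnor K (X (0 : Fin 2) ^ 3 + X 1 ^ 7 + C (σ := Fin 2) (R := K) a * X 0 * X 1 ^ 5) = 12 := by
  have h3 : (3 : K) ≠ 0 := by
    exact_mod_cast CharP.natCast_ne_zero_of_lt (R := K) (n := 3) (by norm_num) (by omega)
  have h7 : (7 : K) ≠ 0 := by
    exact_mod_cast CharP.natCast_ne_zero_of_lt (R := K) (n := 7) (by norm_num) hp
  change milnor K (E12.e12 a) = 12
  rw [milnor, E12.span_range_pd_e12, E12.finrank_quotient_jac h3 h7]
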